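/- Leverage scores are lower semi-continuous in the row weights: let A be a real n×d matrix, and let (w^{(k)})_{k∈ℕ} be a sequence of vectors in ℝⁿ with w^{(k)}_j ≥ 0 for all k and j, converging (entrywise) to w̄ ∈ ℝⁿ. Then for every i ∈ {1,…,n}, τ_i(diag(w̄)·A) ≤ liminf_{k→∞} τ_i(diag(w^{(k)})·A). -/
import Mathlib

open Matrix Filter

/-- The leverage score of row `i` of `M`:
`τᵢ(M) = inf {‖x‖₂² : Mᵀx = mᵢ}` (the set is nonempty since `x = eᵢ` works). -/
noncomputable def lev {n d : ℕ} (M : Matrix (Fin n) (Fin d) ℝ) (i : Fin n) : ℝ :=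
  sInf {t : ℝ | ∃ x : Fin n → ℝ, Mᵀ *ᵥ x = M i ∧ t = ∑ j, (x j) ^ 2}

lemma one_mem_lev_set {n d : ℕ} (M : Matrix (Fin n) (Fin d) ℝ) (i : Fin n) :
    (1:ℝ) ∈ {t : ℝ | ∃ x : Fin n → ℝ, Mᵀ *ᵥ x = M i ∧ t = ∑ j, (x j) ^ 2} := by
  refine ⟨Pi.single i 1, ?_, ?_⟩
  · rw [Matrix.mulVec_single]
    ext j
    simp [Matrix.transpose_apply]
  · simp [Pi.single_apply, Finset.sum_ite_eq']

lemma lev_set_nonempty {n d : ℕ} (M : Matrix (Fin n) (Fin d) ℝ) (i : Fin n) :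
    {t : ℝ | ∃ x : Fin n → ℝ, Mᵀ *ᵥ x = M i ∧ t = ∑ j, (x j) ^ 2}.Nonempty :=
  ⟨1, one_mem_lev_set M i⟩

lemma lev_set_bddBelow {n d : ℕ} (M : Matrix (Fin n) (Fin d) ℝ) (i : Fin n) :
    BddBelow {t : ℝ | ∃ x : Fin n → ℝ, Mᵀ *ᵥ x = M i ∧ t = ∑ j, (x j) ^ 2} := by
  refine ⟨0, fun t ht => ?_⟩
  obtain ⟨x, -, rfl⟩ := ht
  positivity

lemma lev_nonneg {n d : ℕ} (M : Matrix (Fin n) (Fin d) ℝ) (i : Fin n) : 0 ≤ lev M i := by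
  refine le_csInf (lev_set_nonempty M i) ?_
  rintro t ⟨x, -, rfl⟩; positivity

lemma lev_le_one {n d : ℕ} (M : Matrix (Fin n) (Fin d) ℝ) (i : Fin n) : lev M i ≤ 1 :=
  csInf_le (lev_set_bddBelow M i) (one_mem_lev_set M i)

/-- lower semi-continuity of leverage scores in the row weights:
if nonnegative weight vectors `w⁽ᵏ⁾` converge entrywise to `w̄`, then
`τᵢ(diag(w̄)A) ≤ liminf_k τᵢ(diag(w⁽ᵏ⁾)A)` for every `i`. -/
theorem stmt12 {n d : ℕ} (A : Matrix (Fin n) (Fin d) ℝ)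
    (w : ℕ → Fin n → ℝ) (hw : ∀ k j, 0 ≤ w k j)
    (wbar : Fin n → ℝ)
    (hconv : ∀ j, Tendsto (fun k => w k j) atTop (nhds (wbar j)))
    (i : Fin n) :
    lev (Matrix.diagonal wbar * A) i ≤
      liminf (fun k => lev (Matrix.diagonal (w k) * A) i) atTop := by
  set u : ℕ → ℝ := fun k => lev (Matrix.diagonal (w k) * A) i with hu
  set L : ℝ := liminf u atTop with hL
  have hbdd : IsBoundedUnder (· ≤ ·) atTop u :=
    isBoundedUnder_of ⟨1, fun k => lev_le_one _ i⟩
  have hcobdd : IsCoboundedUnder (· ≥ ·) atTop u := hbdd.isCoboundedUnder_ge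
  -- Step 1: a subsequence nearly achieving the liminf
  have hfreq : ∀ m : ℕ, ∃ᶠ k in atTop, u k < L + 1/(m+1) := by
    intro m
    refine frequently_lt_of_liminf_lt hcobdd ?_
    have : (0:ℝ) < 1/(m+1) := by positivity
    linarith
  obtain ⟨φ, hφmono, hφ⟩ := extraction_forall_of_frequently hfreq
  -- Step 2: choose near-optimal witnesses
  have hx : ∀ m : ℕ, ∃ x : Fin n → ℝ,
      (Matrix.diagonal (w (φ m)) * A)ᵀ *ᵥ x = (Matrix.diagonal (w (φ m)) * A) i ∧
      ∑ j, (x j)^2 < L + 2/(m+1) := by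
    intro m
    have hε : (0:ℝ) < 1/(m+1) := by positivity
    obtain ⟨t, ht, htlt⟩ := Real.lt_sInf_add_pos
      (lev_set_nonempty (Matrix.diagonal (w (φ m)) * A) i) hε
    obtain ⟨x, hfeas, rfl⟩ := ht
    refine ⟨x, hfeas, ?_⟩
    have h1 := hφ m
    have h2 : (2:ℝ)/(m+1) = 1/(m+1) + 1/(m+1) := by ring
    rw [h2]
    calc ∑ j, (x j)^2 < lev (Matrix.diagonal (w (φ m)) * A) i + 1/(m+1) := htlt
      _ = u (φ m) + 1/(m+1) := rfl
      _ ≤ L + (1/(m+1) + 1/(m+1)) := by linarith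
  choose X hXfeas hXval using hx
  -- Step 3: extract a convergent subsequence of the witnesses
  have hL0 : 0 ≤ L := by
    refine le_liminf_of_le hcobdd ?_
    exact Eventually.of_forall fun k => lev_nonneg _ i
  have hmem : ∀ m, X m ∈ Metric.closedBall (0 : Fin n → ℝ) (Real.sqrt (L + 2)) := by
    intro m
    rw [Metric.mem_closedBall, dist_zero_right]
    rw [pi_norm_le_iff_of_nonneg (Real.sqrt_nonneg _)]
    intro j
    rw [Real.norm_eq_abs]
    refine Real.abs_le_sqrt ?_
    have h1 : (X m j)^2 ≤ ∑ l, (X m l)^2 := by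
      refine Finset.single_le_sum (f := fun l => (X m l)^2) (fun l _ => by positivity)
        (Finset.mem_univ j)
    have h2 : (2:ℝ)/(m+1) ≤ 2 := by
      rw [div_le_iff₀ (by positivity)]
      nlinarith [Nat.cast_nonneg (α := ℝ) m]
    have := hXval m
    linarith
  obtain ⟨b, -, ψ, hψmono, hψ⟩ := tendsto_subseq_of_bounded Metric.isBounded_closedBall hmem
  have hψcoord : ∀ j, Tendsto (fun m => X (ψ m) j) atTop (nhds (b j)) := by
    intro j
    exact (tendsto_pi_nhds.mp hψ) j
  -- convergence of the weights along the subsequence φ ∘ ψ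
  have hwconv : ∀ j, Tendsto (fun m => w (φ (ψ m)) j) atTop (nhds (wbar j)) := by
    intro j
    exact (hconv j).comp ((hφmono.comp hψmono).tendsto_atTop)
  -- Step 4: pass feasibility to the limit
  have hbfeas : (Matrix.diagonal wbar * A)ᵀ *ᵥ b = (Matrix.diagonal wbar * A) i := by
    ext j
    have hseq : ∀ m, ∑ l, (w (φ (ψ m)) l * A l j) * X (ψ m) l
        = w (φ (ψ m)) i * A i j := by
      intro m
      have := congrFun (hXfeas (ψ m)) j
      simpa [Matrix.mulVec, dotProduct, Matrix.transpose_apply,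
        Matrix.diagonal_mul] using this
    have hlhs : Tendsto (fun m => ∑ l, (w (φ (ψ m)) l * A l j) * X (ψ m) l)
        atTop (nhds (∑ l, (wbar l * A l j) * b l)) := by
      refine tendsto_finset_sum _ fun l _ => ?_
      exact (((hwconv l).mul tendsto_const_nhds).mul (hψcoord l))
    have hrhs : Tendsto (fun m => w (φ (ψ m)) i * A i j)
        atTop (nhds (wbar i * A i j)) := (hwconv i).mul tendsto_const_nhds
    have := tendsto_nhds_unique (hlhs.congr (fun m => hseq m)) hrhs
    simpa [Matrix.mulVec, dotProduct, Matrix.transpose_apply,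
      Matrix.diagonal_mul] using this
  -- Step 5: the limit value is at most L
  have hval : ∑ j, (b j)^2 ≤ L := by
    have hlim1 : Tendsto (fun m => ∑ j, (X (ψ m) j)^2) atTop (nhds (∑ j, (b j)^2)) := by
      refine tendsto_finset_sum _ fun j _ => ?_
      exact (hψcoord j).pow 2
    have hlim2 : Tendsto (fun m => L + 2/((ψ m : ℝ)+1)) atTop (nhds (L + 0)) := by
      refine tendsto_const_nhds.add ?_
      have h0 : Tendsto (fun k : ℕ => (2:ℝ)/((k:ℝ)+1)) atTop (nhds 0) := by
        have := tendsto_one_div_add_atTop_nhds_zero_nat.const_mul (2:ℝ)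
        simpa [div_eq_mul_inv, mul_comm, mul_assoc, mul_left_comm] using this
      exact h0.comp hψmono.tendsto_atTop
    rw [add_zero] at hlim2
    refine le_of_tendsto_of_tendsto' hlim1 hlim2 fun m => (hXval (ψ m)).le
  -- Conclusion
  calc lev (Matrix.diagonal wbar * A) i ≤ ∑ j, (b j)^2 :=
        csInf_le (lev_set_bddBelow _ i) ⟨b, hbfeas, rfl⟩
    _ ≤ L := hval
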